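/- Let α ∈ POPI_n(Y) with rank(α) = m ≥ 1. If α is not regular then its ℋ-class in POPI_n(Y) is a singleton. If α is regular then its ℋ-class has exactly m elements, all elements of this ℋ-class have the same domain and image as α, and if moreover α is idempotent, its ℋ-class is a cyclic group of order m. -/

import Mathlib

/-!
An injective orientation-preserving partial map with domain `A` and image `B`, `|A| = |B| = m`,
is a cyclic shift: for some `j` it sends the `i`-th smallest element of `A` to the `(i + j)`-th
smallest element of `B`, indices mod `m` (`rot A B j`). Shifts compose by adding indices.
ℋ-related elements share domain and image, so the ℋ-class of `α` consists of shifts from `A` to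
`B`. When `A ⊆ Y` the shifts of `A` and of `B` lie in `POPI_n(Y)` and connect any two shifts from
`A` to `B`, so the class has exactly `m` elements; `A ⊆ Y` is also exactly regularity of `α`.
When `A ⊄ Y`, a factor `γ` with `γ β = α` would map `A` injectively into `A`, hence onto `A`,
giving `A ⊆ im γ ⊆ Y`; so the class is `{α}`. An idempotent `α` is the zero shift of `A = B`,
and its class is the cyclic group generated by the shift by one.
-/

open scoped Classical

namespace POPIpaper

/-- Partial transformations of `Ω_n = {1,…,n}`, modelled on `Fin n`. -/
abbrev PT (n : ℕ) := Fin n → Option (Fin n)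

/-- Composition of partial transformations (apply `α` first, then `β`). -/
def comp {n : ℕ} (α β : PT n) : PT n := fun x => (α x).bind β

/-- Domain of a partial transformation. -/
noncomputable def dom {n : ℕ} (α : PT n) : Finset (Fin n) :=
  Finset.univ.filter (fun x => (α x).isSome)

/-- Image of a partial transformation. -/
noncomputable def im {n : ℕ} (α : PT n) : Finset (Fin n) :=
  Finset.univ.filter (fun y => ∃ x, α x = some y)

/-- rank(α) = |Im(α)|. -/
noncomputable def rank {n : ℕ} (α : PT n) : ℕ := (im α).card

/-- Injectivity of a partial transformation. -/
def Inj {n : ℕ} (α : PT n) : Prop :=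
  ∀ x y z : Fin n, α x = some z → α y = some z → x = y

/-- Orientation-preserving: the sequence of images, taken along the increasing
enumeration of the domain, is cyclic, i.e. some rotation of it is sorted. -/
def OP {n : ℕ} (α : PT n) : Prop :=
  ∃ k : ℕ, (((List.finRange n).filterMap α).rotate k).Pairwise (· ≤ ·)

/-- The semigroup `POPI_n(Y)` as a set of partial transformations:
injective, orientation-preserving, with image contained in `Y`. -/
def POPI (n : ℕ) (Y : Finset (Fin n)) : Set (PT n) :=
  {α | Inj α ∧ OP α ∧ ∀ x y : Fin n, α x = some y → y ∈ Y}

/-- Regularity of `α` as an element of the subsemigroup `S`. -/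
def IsRegularIn {n : ℕ} (S : Set (PT n)) (α : PT n) : Prop :=
  ∃ β ∈ S, comp (comp α β) α = α

/-- The partial identity on a subset `A`. -/
def idp {n : ℕ} (A : Finset (Fin n)) : PT n :=
  fun x => if x ∈ A then some x else none

/-- Fixed points of a partial transformation. -/
noncomputable def fix {n : ℕ} (α : PT n) : Finset (Fin n) :=
  Finset.univ.filter (fun x => α x = some x)

/-- Green's relation ℒ on the set `S`: `S¹α = S¹β`. -/
def LRel {n : ℕ} (S : Set (PT n)) (α β : PT n) : Prop :=
  (α = β ∨ ∃ γ ∈ S, comp γ β = α) ∧ (β = α ∨ ∃ γ ∈ S, comp γ α = β)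

/-- Green's relation ℛ on the set `S`: `αS¹ = βS¹`. -/
def RRel {n : ℕ} (S : Set (PT n)) (α β : PT n) : Prop :=
  (α = β ∨ ∃ γ ∈ S, comp β γ = α) ∧ (β = α ∨ ∃ γ ∈ S, comp α γ = β)

/-- Green's relation ℋ = ℒ ∩ ℛ. -/
def HRel {n : ℕ} (S : Set (PT n)) (α β : PT n) : Prop :=
  LRel S α β ∧ RRel S α β

/-- Green's relation 𝒟 = ℒ ∘ ℛ. -/
def DRel {n : ℕ} (S : Set (PT n)) (α β : PT n) : Prop :=
  ∃ γ ∈ S, LRel S α γ ∧ RRel S γ β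

/-- `Φ` is a semigroup isomorphism from the subsemigroup `S` onto `T`. -/
def IsIso {n : ℕ} (S T : Set (PT n)) (Φ : PT n → PT n) : Prop :=
  Set.BijOn Φ S T ∧ ∀ a ∈ S, ∀ b ∈ S, Φ (comp a b) = comp (Φ a) (Φ b)

/-- The product `β * l₁ * ⋯ * l_k` of a nonempty list of partial transformations. -/
def prodList {n : ℕ} (β : PT n) (l : List (PT n)) : PT n := l.foldl comp β

variable {n : ℕ}

@[simp] lemma mem_dom {β : PT n} {x : Fin n} : x ∈ dom β ↔ (β x).isSome := by simp [dom]

@[simp] lemma mem_im {β : PT n} {y : Fin n} : y ∈ im β ↔ ∃ x, β x = some y := by simp [im]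

lemma notMem_dom {β : PT n} {x : Fin n} : x ∉ dom β ↔ β x = none := by simp

lemma dom_comp_subset (β γ : PT n) : dom (comp β γ) ⊆ dom β := by
  intro x hx
  simp only [mem_dom, comp, Option.isSome_bind] at hx ⊢
  exact Option.isSome_of_any hx

lemma im_comp_subset (β γ : PT n) : im (comp β γ) ⊆ im γ := by
  intro y hy
  obtain ⟨x, hx⟩ := mem_im.1 hy
  obtain ⟨z, -, hz⟩ := Option.bind_eq_some_iff.1 hx
  exact mem_im.2 ⟨z, hz⟩

lemma im_subset_of_mem_POPI {Y : Finset (Fin n)} {β : PT n} (hβ : β ∈ POPI n Y) : im β ⊆ Y := by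
  intro y hy
  obtain ⟨x, hx⟩ := mem_im.1 hy
  exact hβ.2.2 x y hx

lemma HRel.refl (S : Set (PT n)) (α : PT n) : HRel S α α :=
  ⟨⟨Or.inl rfl, Or.inl rfl⟩, ⟨Or.inl rfl, Or.inl rfl⟩⟩

lemma HRel.dom_eq_and_im_eq {S : Set (PT n)} {α β : PT n} (h : HRel S α β) :
    dom β = dom α ∧ im β = im α := by
  obtain ⟨⟨hL₁, hL₂⟩, ⟨hR₁, hR₂⟩⟩ := h
  constructor
  · rcases hR₁ with rfl | ⟨γ, -, hγ⟩
    · rfl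
    rcases hR₂ with h | ⟨δ, -, hδ⟩
    · rw [h]
    exact (hδ ▸ dom_comp_subset _ _).antisymm (hγ ▸ dom_comp_subset _ _)
  · rcases hL₁ with rfl | ⟨γ, -, hγ⟩
    · rfl
    rcases hL₂ with h | ⟨δ, -, hδ⟩
    · rw [h]
    exact (hδ ▸ im_comp_subset _ _).antisymm (hγ ▸ im_comp_subset _ _)

noncomputable def imageList (β : PT n) : List (Fin n) := (List.finRange n).filterMap β

lemma imageList_eq_map (β : PT n) :
    imageList β = ((dom β).sort (· ≤ ·)).map fun x => (β x).getD x := by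
  have hsort : (List.finRange n).filter (fun x => (β x).isSome) = (dom β).sort (· ≤ ·) :=
    List.Perm.eq_of_pairwise' ((List.pairwise_le_finRange n).filter _) (Finset.pairwise_sort _ _)
      (List.perm_of_nodup_nodup_toFinset_eq ((List.nodup_finRange n).filter _)
        (Finset.sort_nodup _ _) (by ext; simp))
  rw [← hsort, ← List.filterMap_eq_map_iff_forall_eq_some (f := β).2
    (by simp +contextual [Option.isSome_iff_exists]), List.filterMap_filter]
  congr
  funext x
  cases β x <;> rfl

lemma length_imageList (β : PT n) : (imageList β).length = (dom β).card := by
  simp [imageList_eq_map]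

lemma toFinset_imageList (β : PT n) : (imageList β).toFinset = im β := by
  ext y; simp [imageList]

lemma nodup_imageList_iff {β : PT n} : (imageList β).Nodup ↔ Inj β := by
  rw [imageList_eq_map, List.nodup_map_iff_inj_on (Finset.sort_nodup _ _)]
  simp only [Finset.mem_sort, mem_dom, Option.isSome_iff_exists]
  constructor
  · intro h x y z hx hy
    exact h x ⟨z, hx⟩ y ⟨z, hy⟩ (by simp [hx, hy])
  · rintro h x ⟨z, hx⟩ y ⟨w, hy⟩ hxy
    simp only [hx, hy, Option.getD_some] at hxy
    exact h x y z hx (hxy ▸ hy)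

lemma card_dom_eq_card_im {β : PT n} (hβ : Inj β) : (dom β).card = (im β).card := by
  rw [← length_imageList, ← toFinset_imageList,
    List.toFinset_card_of_nodup (nodup_imageList_iff.2 hβ)]

lemma eq_of_dom_eq_of_imageList_eq {β γ : PT n} (hdom : dom β = dom γ)
    (hl : imageList β = imageList γ) : β = γ := by
  rw [imageList_eq_map, imageList_eq_map, hdom, List.map_inj_left] at hl
  funext x
  by_cases hx : x ∈ dom γ
  · obtain ⟨y, hy⟩ := Option.isSome_iff_exists.1 (mem_dom.1 hx)
    obtain ⟨z, hz⟩ := Option.isSome_iff_exists.1 (mem_dom.1 (hdom ▸ hx))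
    have := hl x ((Finset.mem_sort _).2 hx)
    rw [hy, hz, Option.getD_some, Option.getD_some] at this
    rw [hy, hz, this]
  · rw [notMem_dom.1 hx, (notMem_dom (β := β)).1 (by rwa [hdom])]

lemma op_iff_isRotated {β : PT n} (hβ : Inj β) :
    OP β ↔ imageList β ~r (im β).sort (· ≤ ·) := by
  refine ⟨fun ⟨k, hk⟩ => ⟨k, ?_⟩, fun ⟨k, hk⟩ => ⟨k, hk ▸ Finset.pairwise_sort _ _⟩⟩
  refine List.Perm.eq_of_pairwise' hk (Finset.pairwise_sort _ _) ?_
  apply List.perm_of_nodup_nodup_toFinset_eq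
  · exact List.nodup_rotate.2 (nodup_imageList_iff.2 hβ)
  · exact Finset.sort_nodup _ _
  · ext y
    rw [List.mem_toFinset, List.mem_rotate, ← List.mem_toFinset, toFinset_imageList,
        List.mem_toFinset, Finset.mem_sort]

noncomputable def rot (A B : Finset (Fin n)) (j : ℕ) : PT n :=
  fun x => if x ∈ A then (B.sort (· ≤ ·))[((A.sort (· ≤ ·)).idxOf x + j) % B.card]? else none

section rot

variable {A B C : Finset (Fin n)}

lemma rot_apply_of_mem (hAB : A.card = B.card) {x : Fin n} (hx : x ∈ A) (j : ℕ) :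
    rot A B j x = some ((B.sort (· ≤ ·))[((A.sort (· ≤ ·)).idxOf x + j) % B.card]'(by
      rw [Finset.length_sort]; exact Nat.mod_lt _ (hAB ▸ Finset.card_pos.2 ⟨x, hx⟩))) := by
  simp [rot, hx]

lemma rot_apply_of_notMem {x : Fin n} (hx : x ∉ A) (j : ℕ) : rot A B j x = none := if_neg hx

lemma dom_rot (hAB : A.card = B.card) (j : ℕ) : dom (rot A B j) = A := by
  ext x
  by_cases hx : x ∈ A
  · simp [rot_apply_of_mem hAB hx, hx]
  · simp [rot_apply_of_notMem hx, hx]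

lemma imageList_rot (hAB : A.card = B.card) (j : ℕ) :
    imageList (rot A B j) = (B.sort (· ≤ ·)).rotate j := by
  rw [imageList_eq_map, dom_rot hAB]
  refine List.ext_getElem (by simp [hAB]) fun i h _ => ?_
  have hi : i < (A.sort (· ≤ ·)).length := by simpa using h
  rw [List.getElem_map, rot_apply_of_mem hAB (Finset.mem_sort _ |>.1 (List.getElem_mem hi)),
    Option.getD_some, List.getElem_rotate, List.Nodup.idxOf_getElem (A.sort_nodup _)]
  simp

lemma im_rot (hAB : A.card = B.card) (j : ℕ) : im (rot A B j) = B := by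
  ext y
  rw [← toFinset_imageList, imageList_rot hAB, List.mem_toFinset, List.mem_rotate, Finset.mem_sort]

lemma inj_rot (hAB : A.card = B.card) (j : ℕ) : Inj (rot A B j) := by
  rw [← nodup_imageList_iff, imageList_rot hAB, List.nodup_rotate]
  exact B.sort_nodup _

lemma op_rot (hAB : A.card = B.card) (j : ℕ) : OP (rot A B j) := by
  rw [op_iff_isRotated (inj_rot hAB j), imageList_rot hAB, im_rot hAB]
  exact List.IsRotated.forall _ _

lemma rot_mem_POPI {Y : Finset (Fin n)} (hAB : A.card = B.card) (hBY : B ⊆ Y) (j : ℕ) :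
    rot A B j ∈ POPI n Y :=
  ⟨inj_rot hAB j, op_rot hAB j, fun x _ h => hBY (im_rot hAB j ▸ mem_im.2 ⟨x, h⟩)⟩

lemma rot_eq_rot_iff (hAB : A.card = B.card) (hB : B.Nonempty) {i j : ℕ} :
    rot A B i = rot A B j ↔ i ≡ j [MOD B.card] := by
  have hsort : B.sort (· ≤ ·) ≠ [] := List.ne_nil_of_length_pos (by simpa using hB.card_pos)
  constructor
  · intro h
    have := congrArg imageList h
    rw [imageList_rot hAB, imageList_rot hAB] at this
    simpa [Nat.ModEq] using (B.sort_nodup _).rotate_congr hsort i j this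
  · intro h
    refine eq_of_dom_eq_of_imageList_eq (by rw [dom_rot hAB, dom_rot hAB]) ?_
    rw [imageList_rot hAB, imageList_rot hAB, ← List.rotate_mod, ← List.rotate_mod _ j]
    simpa using congrArg _ h

lemma comp_rot (hAB : A.card = B.card) (hBC : B.card = C.card) (i j : ℕ) :
    comp (rot A B i) (rot B C j) = rot A C (i + j) := by
  funext x
  by_cases hx : x ∈ A
  · have hmem : (B.sort (· ≤ ·))[((A.sort (· ≤ ·)).idxOf x + i) % B.card]'(by
        rw [Finset.length_sort]; exact Nat.mod_lt _ (hAB ▸ Finset.card_pos.2 ⟨x, hx⟩)) ∈ B :=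
      (Finset.mem_sort _).1 (List.getElem_mem _)
    rw [comp, rot_apply_of_mem hAB hx, Option.bind_some, rot_apply_of_mem hBC hmem,
      rot_apply_of_mem (hAB.trans hBC) hx, List.Nodup.idxOf_getElem (B.sort_nodup _)]
    simp only [hBC, Nat.mod_add_mod, Nat.add_assoc]
  · simp [comp, rot_apply_of_notMem hx]

lemma exists_eq_rot {β : PT n} (hβ : Inj β) (hOP : OP β) : ∃ j, β = rot (dom β) (im β) j := by
  obtain ⟨j, hj⟩ := ((op_iff_isRotated hβ).1 hOP).symm
  have hAB := card_dom_eq_card_im hβ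
  exact ⟨j, eq_of_dom_eq_of_imageList_eq (dom_rot hAB j).symm (by rw [imageList_rot hAB, hj])⟩

end rot

lemma exists_add_modEq {m : ℕ} (hm : 0 < m) (i j : ℕ) : ∃ k, k + j ≡ i [MOD m] := by
  refine ⟨(m - 1) * j + i, ?_⟩
  have : (m - 1) * j + i + j = m * j + i := by
    obtain ⟨m, rfl⟩ := Nat.exists_eq_add_one_of_ne_zero hm.ne'
    simp only [Nat.add_sub_cancel]
    ring
  rw [this]
  simp [Nat.ModEq]

section Green

variable {Y : Finset (Fin n)}

lemma hRel_rot {A B : Finset (Fin n)} (hAB : A.card = B.card) (hB : B.Nonempty)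
    (hAY : A ⊆ Y) (hBY : B ⊆ Y) (i j : ℕ) : HRel (POPI n Y) (rot A B i) (rot A B j) := by
  have left (i j : ℕ) : ∃ γ ∈ POPI n Y, comp γ (rot A B j) = rot A B i := by
    obtain ⟨k, hk⟩ := exists_add_modEq hB.card_pos i j
    exact ⟨rot A A k, rot_mem_POPI rfl hAY k, by rwa [comp_rot rfl hAB, rot_eq_rot_iff hAB hB]⟩
  have right (i j : ℕ) : ∃ γ ∈ POPI n Y, comp (rot A B j) γ = rot A B i := by
    obtain ⟨k, hk⟩ := exists_add_modEq hB.card_pos i j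
    exact ⟨rot B B k, rot_mem_POPI rfl hBY k,
      by rwa [comp_rot hAB rfl, rot_eq_rot_iff hAB hB, add_comm]⟩
  exact ⟨⟨.inr (left i j), .inr (left j i)⟩, ⟨.inr (right i j), .inr (right j i)⟩⟩

lemma dom_subset_of_isRegularIn {α : PT n} (hα : Inj α) (hreg : IsRegularIn (POPI n Y) α) :
    dom α ⊆ Y := by
  obtain ⟨β, hβ, hαβα⟩ := hreg
  intro x hx
  obtain ⟨y, hy⟩ := Option.isSome_iff_exists.1 (mem_dom.1 hx)
  have hx' := congrFun hαβα x
  rw [comp, comp, hy, Option.bind_some] at hx'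
  obtain ⟨x', hβy, hx'y⟩ := Option.bind_eq_some_iff.1 hx'
  obtain rfl : x' = x := hα x' x y hx'y hy
  exact hβ.2.2 y x' hβy

lemma isRegularIn_of_dom_subset {α : PT n} (hα : α ∈ POPI n Y) (hne : (dom α).Nonempty)
    (hAY : dom α ⊆ Y) : IsRegularIn (POPI n Y) α := by
  obtain ⟨j, hj⟩ := exists_eq_rot hα.1 hα.2.1
  have hAB := card_dom_eq_card_im hα.1
  have hB : (im α).Nonempty := Finset.card_pos.1 (hAB ▸ hne.card_pos)
  obtain ⟨k, hk⟩ := exists_add_modEq hB.card_pos 0 j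
  refine ⟨rot (im α) (dom α) k, rot_mem_POPI hAB.symm hAY k, ?_⟩
  have : comp (comp (rot (dom α) (im α) j) (rot (im α) (dom α) k)) (rot (dom α) (im α) j)
      = rot (dom α) (im α) j := by
    rw [comp_rot hAB hAB.symm, comp_rot rfl hAB, rot_eq_rot_iff hAB hB]
    simpa using Nat.ModEq.add_right j (show j + k ≡ 0 [MOD (im α).card] by rwa [add_comm])
  rwa [← hj] at this

lemma isRegularIn_iff_dom_subset {α : PT n} (hα : α ∈ POPI n Y) (hne : (dom α).Nonempty) :
    IsRegularIn (POPI n Y) α ↔ dom α ⊆ Y :=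
  ⟨dom_subset_of_isRegularIn hα.1, isRegularIn_of_dom_subset hα hne⟩

lemma subset_im_of_mapsTo {γ : PT n} (hγ : Inj γ) {A : Finset (Fin n)}
    (h : ∀ x ∈ A, ∃ y ∈ A, γ x = some y) : A ⊆ im γ := by
  choose f hfA hf using h
  intro y hy
  obtain ⟨x, hx, rfl⟩ := Finset.surj_on_of_inj_on_of_card_le f hfA
    (fun x₁ x₂ h₁ h₂ he => hγ x₁ x₂ _ (hf x₁ h₁) (he ▸ hf x₂ h₂)) le_rfl y hy
  exact mem_im.2 ⟨x, hf x hx⟩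

lemma dom_subset_of_hRel_of_ne {α β : PT n} (h : HRel (POPI n Y) α β) (hne : α ≠ β) :
    dom α ⊆ Y := by
  obtain ⟨γ, hγ, hγβ⟩ := h.1.1.resolve_left hne
  have hdom := h.dom_eq_and_im_eq.1
  refine (subset_im_of_mapsTo hγ.1 fun x hx => ?_).trans (im_subset_of_mem_POPI hγ)
  obtain ⟨z, hz⟩ := Option.isSome_iff_exists.1 (mem_dom.1 hx)
  rw [← hγβ, comp] at hz
  obtain ⟨y, hy, hβy⟩ := Option.bind_eq_some_iff.1 hz
  exact ⟨y, hdom ▸ mem_dom.2 (by simp [hβy]), hy⟩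

lemma hClass_eq_singleton {α : PT n} (hα : α ∈ POPI n Y) (hne : (dom α).Nonempty)
    (hreg : ¬ IsRegularIn (POPI n Y) α) :
    {β | β ∈ POPI n Y ∧ HRel (POPI n Y) α β} = {α} := by
  refine Set.eq_singleton_iff_unique_mem.2 ⟨⟨hα, HRel.refl _ α⟩, fun β ⟨_, h⟩ => ?_⟩
  by_contra hβ
  exact hreg ((isRegularIn_iff_dom_subset hα hne).2 (dom_subset_of_hRel_of_ne h (Ne.symm hβ)))

lemma hClass_eq_range {α : PT n} (hα : α ∈ POPI n Y) (hne : (dom α).Nonempty)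
    (hAY : dom α ⊆ Y) :
    {β | β ∈ POPI n Y ∧ HRel (POPI n Y) α β} = Set.range (rot (dom α) (im α)) := by
  have hAB := card_dom_eq_card_im hα.1
  have hB : (im α).Nonempty := Finset.card_pos.1 (hAB ▸ hne.card_pos)
  have hBY := im_subset_of_mem_POPI hα
  ext β
  constructor
  · rintro ⟨hβ, h⟩
    obtain ⟨j, hj⟩ := exists_eq_rot hβ.1 hβ.2.1
    obtain ⟨hd, hi⟩ := h.dom_eq_and_im_eq
    exact ⟨j, by rw [← hd, ← hi, ← hj]⟩
  · rintro ⟨j, rfl⟩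
    obtain ⟨j₀, hj₀⟩ := exists_eq_rot hα.1 hα.2.1
    have := hRel_rot hAB hB hAY hBY j₀ j
    exact ⟨rot_mem_POPI hAB hBY j, by rwa [← hj₀] at this⟩

end Green

lemma ncard_range_rot {A B : Finset (Fin n)} (hAB : A.card = B.card) (hB : B.Nonempty) :
    (Set.range (rot A B)).ncard = B.card := by
  have hrange : Set.range (rot A B) = Set.range fun j : Fin B.card => rot A B j := by
    ext β
    constructor
    · rintro ⟨j, rfl⟩
      exact ⟨⟨j % B.card, Nat.mod_lt _ hB.card_pos⟩, (rot_eq_rot_iff hAB hB).2 (Nat.mod_modEq j _)⟩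
    · rintro ⟨j, rfl⟩
      exact ⟨j, rfl⟩
  rw [hrange, Set.ncard_range_of_injective, Nat.card_eq_fintype_card, Fintype.card_fin]
  intro i j h
  exact Fin.ext (Nat.ModEq.eq_of_lt_of_lt ((rot_eq_rot_iff hAB hB).1 h) i.2 j.2)

lemma im_eq_dom_of_idempotent {α : PT n} (hα : Inj α) (h : comp α α = α) : im α = dom α := by
  refine Finset.eq_of_subset_of_card_le (fun y hy => ?_) (card_dom_eq_card_im hα).le
  obtain ⟨x, hx⟩ := mem_im.1 hy
  have := congrFun h x
  rw [comp, hx, Option.bind_some] at this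
  simp [this]

lemma eq_rot_zero_of_idempotent {α : PT n} (hα : Inj α) (hOP : OP α) (hne : (dom α).Nonempty)
    (h : comp α α = α) : α = rot (dom α) (dom α) 0 := by
  obtain ⟨j, hj⟩ := exists_eq_rot hα hOP
  rw [im_eq_dom_of_idempotent hα h] at hj
  have hjj : rot (dom α) (dom α) (j + j) = rot (dom α) (dom α) (j + 0) := by
    rw [← comp_rot rfl rfl, ← hj, h, add_zero, ← hj]
  exact hj.trans ((rot_eq_rot_iff rfl hne).2 (((rot_eq_rot_iff rfl hne).1 hjj).add_left_cancel' j))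

lemma prodList_replicate_rot (D : Finset (Fin n)) (i k : ℕ) :
    prodList (rot D D i) (List.replicate k (rot D D 1)) = rot D D (i + k) := by
  induction k generalizing i with
  | zero => rfl
  | succ k ih =>
    rw [List.replicate_succ, prodList, List.foldl_cons, comp_rot rfl rfl, ← prodList, ih,
      Nat.add_right_comm, Nat.add_assoc]

lemma range_rot_eq_setOf_rot_one_add {D : Finset (Fin n)} (hD : D.Nonempty) :
    Set.range (rot D D) = {β | ∃ k < D.card, rot D D (1 + k) = β} := by
  refine (Set.range_subset_iff.2 fun j => ?_).antisymm fun β ⟨k, _, hk⟩ => ⟨1 + k, hk⟩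
  refine ⟨(j + (D.card - 1)) % D.card, Nat.mod_lt _ hD.card_pos, (rot_eq_rot_iff rfl hD).2 ?_⟩
  calc 1 + (j + (D.card - 1)) % D.card ≡ 1 + (j + (D.card - 1)) [MOD D.card] :=
        (Nat.mod_modEq _ _).add_left 1
    _ = j + D.card := by have := hD.card_pos; omega
    _ ≡ j [MOD D.card] := by simp [Nat.ModEq]

theorem green_H_class_general {n : ℕ} (Y : Finset (Fin n))
    (α : PT n) (hα : α ∈ POPI n Y) (m : ℕ) (hm : 1 ≤ m) (hrk : rank α = m) :
    (¬ IsRegularIn (POPI n Y) α →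
      {β | β ∈ POPI n Y ∧ HRel (POPI n Y) α β} = {α}) ∧
    (IsRegularIn (POPI n Y) α →
      Set.ncard {β | β ∈ POPI n Y ∧ HRel (POPI n Y) α β} = m ∧
      (∀ β ∈ POPI n Y, HRel (POPI n Y) α β → dom β = dom α ∧ im β = im α) ∧
      (comp α α = α →
        -- the ℋ-class of the idempotent `α` is a cyclic group of order `m`:
        -- it consists of the powers `γ, γ², …, γ^m` of a single element, `γ^m = α`
        -- is its identity, and it is closed under composition
        ∃ γ : PT n,
          {β | β ∈ POPI n Y ∧ HRel (POPI n Y) α β} =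
            {β | ∃ k < m, prodList γ (List.replicate k γ) = β} ∧
          prodList γ (List.replicate (m - 1) γ) = α ∧
          ∀ β₁ ∈ {β | β ∈ POPI n Y ∧ HRel (POPI n Y) α β},
            ∀ β₂ ∈ {β | β ∈ POPI n Y ∧ HRel (POPI n Y) α β},
              comp α β₁ = β₁ ∧ comp β₁ α = β₁ ∧
              comp β₁ β₂ ∈ {β | β ∈ POPI n Y ∧ HRel (POPI n Y) α β})) := by
  have hB : (im α).Nonempty := Finset.card_pos.1 (hrk ▸ hm : 0 < rank α)
  have hAB := card_dom_eq_card_im hα.1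
  have hA : (dom α).Nonempty := Finset.card_pos.1 (hAB ▸ hB.card_pos)
  refine ⟨hClass_eq_singleton hα hA, fun hreg => ?_⟩
  have hH := hClass_eq_range hα hA ((isRegularIn_iff_dom_subset hα hA).1 hreg)
  refine ⟨by rw [hH, ncard_range_rot hAB hB]; exact hrk, fun β _ h => h.dom_eq_and_im_eq,
    fun hidem => ?_⟩
  have hα₀ := eq_rot_zero_of_idempotent hα.1 hα.2.1 hA hidem
  have hm' : (dom α).card = m := hAB.trans hrk
  rw [im_eq_dom_of_idempotent hα.1 hidem] at hH
  generalize dom α = D at hH hα₀ hA hm'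
  subst hα₀ hm'
  refine ⟨rot D D 1, ?_, ?_, ?_⟩
  · simp only [prodList_replicate_rot, hH, range_rot_eq_setOf_rot_one_add hA]
  · rw [prodList_replicate_rot, rot_eq_rot_iff rfl hA, Nat.add_sub_cancel' hA.card_pos]
    simp [Nat.ModEq]
  · rw [hH]
    rintro _ ⟨i, rfl⟩ _ ⟨j, rfl⟩
    exact ⟨by rw [comp_rot rfl rfl, zero_add], by rw [comp_rot rfl rfl, add_zero],
      ⟨i + j, (comp_rot rfl rfl i j).symm⟩⟩

/-- ℋ-classes in `POPI_n(Y)`. -/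
theorem green_H_class {n : ℕ} (Y : Finset (Fin n)) (hY : Y.Nonempty)
    (α : PT n) (hα : α ∈ POPI n Y) (m : ℕ) (hm : 1 ≤ m) (hrk : rank α = m) :
    (¬ IsRegularIn (POPI n Y) α →
      {β | β ∈ POPI n Y ∧ HRel (POPI n Y) α β} = {α}) ∧
    (IsRegularIn (POPI n Y) α →
      Set.ncard {β | β ∈ POPI n Y ∧ HRel (POPI n Y) α β} = m ∧
      (∀ β ∈ POPI n Y, HRel (POPI n Y) α β → dom β = dom α ∧ im β = im α) ∧
      (comp α α = α →
        -- the ℋ-class of the idempotent `α` is a cyclic group of order `m`: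
        -- it consists of the powers `γ, γ², …, γ^m` of a single element, `γ^m = α`
        -- is its identity, and it is closed under composition
        ∃ γ : PT n,
          {β | β ∈ POPI n Y ∧ HRel (POPI n Y) α β} =
            {β | ∃ k < m, prodList γ (List.replicate k γ) = β} ∧
          prodList γ (List.replicate (m - 1) γ) = α ∧
          ∀ β₁ ∈ {β | β ∈ POPI n Y ∧ HRel (POPI n Y) α β},
            ∀ β₂ ∈ {β | β ∈ POPI n Y ∧ HRel (POPI n Y) α β},
              comp α β₁ = β₁ ∧ comp β₁ α = β₁ ∧
              comp β₁ β₂ ∈ {β | β ∈ POPI n Y ∧ HRel (POPI n Y) α β})) :=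
  green_H_class_general Y α hα m hm hrk

end POPIpaper
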